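/- In the change-point model below, for 0 ≤ l < n, ν-almost everywhere ν(θ > n − l − 1 | 𝓕_n) = (1 − Π_{n−l−1}) · (∑_{k=0}^{l} p^{l−k} q L_{k+1}(X_{n−l−1}, …, X_n) + p^{l+1} L₀(X_{n−l−1}, …, X_n)) / G_{l+1}(X_{n−l−1}, …, X_n, Π_{n−l−1}), where Π_m := ν(θ ≤ m | 𝓕_m). -/

import Mathlib

open MeasureTheory Finset
open scoped NNReal ENNReal

noncomputable section

/-- `L_m(x_k, …, x_N) = ∏_{r=k+1}^{N-m} f⁰(x_{r-1}, x_r) · ∏_{r=N-m+1}^{N} f¹(x_{r-1}, x_r)`. -/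
def Lfn {E : Type*} (f0 f1 : E → E → ℝ≥0) (k N m : ℕ) (xv : ℕ → E) : ℝ≥0 :=
  (∏ r ∈ Finset.Icc (k + 1) (N - m), f0 (xv (r - 1)) (xv r)) *
    ∏ r ∈ Finset.Icc (N - m + 1) N, f1 (xv (r - 1)) (xv r)

/-- Density `ℓ_j(x₀,…,x_n)` of the observations given the change point `θ = j`:
`ℓ_j = L_{n-j+1}` if `1 ≤ j ≤ n`, `ℓ₀ = L_n`, `ℓ_j = L₀` for `j > n`. -/
def ellDens {E : Type*} (f0 f1 : E → E → ℝ≥0) (n j : ℕ) (xv : ℕ → E) : ℝ≥0 :=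
  if j = 0 then Lfn f0 f1 0 n n xv
  else if j ≤ n then Lfn f0 f1 0 n (n - j + 1) xv
  else Lfn f0 f1 0 n 0 xv

/-- Extension of the observations `(x₁, …, x_n)` to a full trajectory `(x₀, x₁, …, x_n)`
with `x₀ = x` (entries beyond `n` are irrelevant and set to `x`). -/
def extvec {E : Type*} (n : ℕ) (x : E) (xs : Fin n → E) : ℕ → E := fun r =>
  if h : 1 ≤ r ∧ r ≤ n then xs ⟨r - 1, by omega⟩ else x

/-- The prior distribution of the change point: `ρ 0 = π`, `ρ j = (1-π) p^(j-1) (1-p)`, `j ≥ 1`. -/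
def prior (p π : ℝ) (j : ℕ) : ℝ≥0∞ :=
  if j = 0 then ENNReal.ofReal π else ENNReal.ofReal ((1 - π) * p ^ (j - 1) * (1 - p))

/-- The joint law `ν` of `(θ, X₁, …, X_n)` given `X₀ = x`: its restriction to `{j} × Eⁿ` is
`ρ j` times the measure with density `(x₁,…,x_n) ↦ ℓ_j(x, x₁, …, x_n)` w.r.t. `μ^⊗n`. -/
def nuMeasure {E : Type*} [MeasurableSpace E] (μ : Measure E) (f0 f1 : E → E → ℝ≥0)
    (p π : ℝ) (x : E) (n : ℕ) : Measure (ℕ × (Fin n → E)) :=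
  Measure.sum fun j =>
    prior p π j •
      Measure.map (fun xs => (j, xs))
        ((Measure.pi fun _ : Fin n => μ).withDensity fun xs =>
          (ellDens f0 f1 n j (extvec n x xs) : ℝ≥0∞))

/-- `S(x₀, …, x_m) = π L_m + (1-π)(∑_{i=1}^m p^{i-1} q L_{m-i+1} + p^m L₀)`. -/
def Sfn {E : Type*} (f0 f1 : E → E → ℝ≥0) (p π : ℝ) (m : ℕ) (xv : ℕ → E) : ℝ :=
  π * (Lfn f0 f1 0 m m xv : ℝ) +
    (1 - π) * ((∑ i ∈ Finset.Icc 1 m, p ^ (i - 1) * (1 - p) * (Lfn f0 f1 0 m (m - i + 1) xv : ℝ)) +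
      p ^ m * (Lfn f0 f1 0 m 0 xv : ℝ))

/-- `G_{l+1}(x_k, …, x_{k+l+1}, α) = α L_{l+1} + (1-α)(∑_{i=0}^{l} p^{l-i} q L_{i+1} + p^{l+1} L₀)`. -/
def Gfn {E : Type*} (f0 f1 : E → E → ℝ≥0) (p : ℝ) (k l : ℕ) (xv : ℕ → E) (α : ℝ) : ℝ :=
  α * (Lfn f0 f1 k (k + l + 1) (l + 1) xv : ℝ) +
    (1 - α) *
      ((∑ i ∈ Finset.range (l + 1), p ^ (l - i) * (1 - p) * (Lfn f0 f1 k (k + l + 1) (i + 1) xv : ℝ)) +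
        p ^ (l + 1) * (Lfn f0 f1 k (k + l + 1) 0 xv : ℝ))

/-- The σ-algebra `𝓕_m` generated by the observations `(X₁, …, X_m)`, `m ≤ n`. -/
def Ffil {E : Type*} [MeasurableSpace E] (n m : ℕ) (h : m ≤ n) :
    MeasurableSpace (ℕ × (Fin n → E)) :=
  MeasurableSpace.comap (fun ω => fun i : Fin m => ω.2 (Fin.castLE h i)) inferInstance

end

/-!
Given `θ = j`, the observations form a Markov chain whose transition density switches from
`f⁰` to `f¹` at step `j`. Since every transition density integrates to one, integrating out
the last observations shows that `(X₁, …, X_m)` has density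
`D_m(T) = ∑_{j ∈ T} ρ(j) ∏_{r ≤ m} h_j(x_{r-1}, x_r)` on `{θ ∈ T}`, so Bayes' formula gives
`ν(θ ∈ T | 𝓕_m) = D_m(T) / D_m(ℕ)`.

With `m₀ = n - l - 1`, the `n`-step densities factor through the `m₀`-step ones: on
`{θ ≤ m₀}` the last `l + 1` steps contribute `L_{l+1}`, while on `{θ > m₀}` the first `m₀`
steps do not see `θ` and, the prior being geometric, the last ones contribute
`S = ∑_k p^{l-k} q L_{k+1} + p^{l+1} L₀` times the tail mass `(1 - π) p^{m₀}`. Writing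
`D_{m₀}(ℕ) = a + b` with `a = D_{m₀}({θ ≤ m₀})`, the posterior is `b S / (a L_{l+1} + b S)`;
dividing by `a + b` expresses it through `Π_{m₀} = a / (a + b)`.
-/

section Posterior

variable {α β : Type*} [MeasurableSpace α] [mβ : MeasurableSpace β] {ν : Measure α}
  {κ : Measure β} {g : α → β} {D DA : β → ℝ≥0∞}

lemma ae_lt_top_of_map_eq_withDensity [IsFiniteMeasure ν] (hD : Measurable D)
    (hmap : ν.map g = κ.withDensity D) : ∀ᵐ y ∂κ, D y < ∞ := by
  refine ae_lt_top hD ?_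
  rw [← setLIntegral_univ, ← withDensity_apply _ MeasurableSet.univ, ← hmap]
  exact measure_ne_top _ _

lemma ae_ne_zero_ne_top_of_map_eq_withDensity [IsFiniteMeasure ν] (hg : Measurable g)
    (hD : Measurable D) (hmap : ν.map g = κ.withDensity D) :
    ∀ᵐ ω ∂ν, D (g ω) ≠ 0 ∧ D (g ω) ≠ ∞ := by
  have hmeas : MeasurableSet {y | D y ≠ 0 ∧ D y ≠ ∞} :=
    (hD (measurableSet_singleton 0)).compl.inter (hD (measurableSet_singleton ∞)).compl
  rw [← ae_map_iff hg.aemeasurable hmeas, hmap, ae_withDensity_iff hD]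
  filter_upwards [ae_lt_top_of_map_eq_withDensity hD hmap] with y hy hy0
  exact ⟨hy0, hy.ne⟩

theorem condExp_indicator_comap_ae_eq_div [IsFiniteMeasure ν] (hg : Measurable g)
    {A : Set α} (hA : MeasurableSet A) (hD : Measurable D) (hDA : Measurable DA) (hle : DA ≤ D)
    (hmap : ν.map g = κ.withDensity D) (hmapA : (ν.restrict A).map g = κ.withDensity DA) :
    ν[A.indicator fun _ => (1 : ℝ) | mβ.comap g] =ᵐ[ν] fun ω => (DA (g ω) / D (g ω)).toReal := by
  have hR : Measurable fun y => DA y / D y := hDA.div hD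
  have hR_le : ∀ y, DA y / D y ≤ 1 := fun y => ENNReal.div_le_of_le_mul (by simpa using hle y)
  have hR_meas : Measurable fun ω => (DA (g ω) / D (g ω)).toReal :=
    ENNReal.measurable_toReal.comp (hR.comp hg)
  refine (ae_eq_condExp_of_forall_setIntegral_eq hg.comap_le
    ((integrable_const (1 : ℝ)).indicator hA) (fun s _ _ => ?_) ?_ ?_).symm
  · refine (Integrable.mono' (integrable_const 1) hR_meas.aestronglyMeasurable
      (Filter.Eventually.of_forall fun ω => ?_)).integrableOn
    rw [Real.norm_of_nonneg ENNReal.toReal_nonneg]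
    exact ENNReal.toReal_le_of_le_ofReal zero_le_one (by simpa using hR_le _)
  · rintro _ ⟨B, hB, rfl⟩ -
    have hcancel : ∀ᵐ y ∂κ, y ∈ B → (D * fun y => DA y / D y) y = DA y := by
      filter_upwards [ae_lt_top_of_map_eq_withDensity hD hmap] with y hy _
      rcases eq_or_ne (D y) 0 with h0 | h0
      · simp [h0, le_antisymm (h0 ▸ hle y) zero_le]
      · exact ENNReal.mul_div_cancel h0 hy.ne
    rw [setIntegral_indicator hA, setIntegral_const, smul_eq_mul, mul_one,
      integral_toReal (f := fun ω => DA (g ω) / D (g ω)) (hR.comp hg).aemeasurable.restrict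
        (Filter.Eventually.of_forall fun ω => (hR_le _).trans_lt ENNReal.one_lt_top),
      ← setLIntegral_map hB hR hg, hmap, setLIntegral_withDensity_eq_setLIntegral_mul _ hD hR hB,
      setLIntegral_congr_fun_ae hB hcancel, ← withDensity_apply _ hB, ← hmapA,
      Measure.map_apply hg hB, Measure.restrict_apply (hg hB), measureReal_def]
  · exact (hR.comp (comap_measurable g)).ennreal_toReal.stronglyMeasurable.aestronglyMeasurable

end Posterior

section MarkovPath

variable {E : Type*} (h : ℕ → E → E → ℝ≥0) (x : E)

def transitionProd (k N : ℕ) (xv : ℕ → E) : ℝ≥0 :=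
  ∏ r ∈ Ioc k N, h r (xv (r - 1)) (xv r)

def pathDensity (m : ℕ) (xs : Fin m → E) : ℝ≥0 :=
  transitionProd h 0 m (extvec m x xs)

lemma transitionProd_mul_transitionProd {k M N : ℕ} (hkM : k ≤ M) (hMN : M ≤ N) (xv : ℕ → E) :
    transitionProd h k M xv * transitionProd h M N xv = transitionProd h k N xv :=
  prod_Ioc_consecutive _ hkM hMN

lemma transitionProd_congr {k M : ℕ} {xv yv : ℕ → E} (hxy : ∀ r ≤ M, xv r = yv r) :
    transitionProd h k M xv = transitionProd h k M yv :=
  prod_congr rfl fun r hr => by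
    rw [mem_Ioc] at hr
    rw [hxy r hr.2, hxy (r - 1) (by omega)]

lemma transitionProd_succ (N : ℕ) (xv : ℕ → E) :
    transitionProd h N (N + 1) xv = h (N + 1) (xv N) (xv (N + 1)) := by
  simp [transitionProd]

lemma extvec_take {m n : ℕ} (hmn : m ≤ n) (xs : Fin n → E) {r : ℕ} (hr : r ≤ m) :
    extvec m x (Fin.take m hmn xs) r = extvec n x xs r := by
  unfold extvec
  split_ifs <;> first | rfl | omega

lemma extvec_snoc_last {n : ℕ} (xs : Fin n → E) (y : E) :
    extvec (n + 1) x (Fin.snoc xs y) (n + 1) = y := by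
  rw [extvec, dif_pos ⟨n.succ_pos, le_rfl⟩]
  exact Fin.snoc_last (α := fun _ => E) y xs

lemma pathDensity_eq_mul {m n : ℕ} (hmn : m ≤ n) (xs : Fin n → E) :
    pathDensity h x n xs
      = pathDensity h x m (Fin.take m hmn xs) * transitionProd h m n (extvec n x xs) := by
  rw [pathDensity, pathDensity, ← transitionProd_mul_transitionProd h (Nat.zero_le m) hmn,
    transitionProd_congr h fun r hr => extvec_take x hmn xs hr]

lemma pathDensity_snoc {n : ℕ} (xs : Fin n → E) (y : E) :
    pathDensity h x (n + 1) (Fin.snoc xs y)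
      = pathDensity h x n xs * h (n + 1) (extvec n x xs n) y := by
  rw [pathDensity_eq_mul h x n.le_succ, transitionProd_succ, Fin.take_eq_init, Fin.init_snoc,
    ← extvec_take x n.le_succ _ le_rfl, Fin.take_eq_init, Fin.init_snoc, extvec_snoc_last]

variable [MeasurableSpace E]

lemma measurable_extvec (m r : ℕ) : Measurable fun xs : Fin m → E => extvec m x xs r := by
  unfold extvec
  split_ifs
  · exact measurable_pi_apply _
  · exact measurable_const

variable {h}

lemma measurable_pathDensity (hh : ∀ r, Measurable (Function.uncurry (h r))) (m : ℕ) :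
    Measurable (pathDensity h x m) := by
  unfold pathDensity transitionProd
  exact Finset.measurable_prod _ fun r _ =>
    (hh r).comp ((measurable_extvec x m (r - 1)).prodMk (measurable_extvec x m r))

lemma measurable_take {m n : ℕ} (hmn : m ≤ n) : Measurable (Fin.take (α := fun _ => E) m hmn) :=
  measurable_pi_lambda _ fun _ => measurable_pi_apply _

lemma measurable_take_snd {α : Type*} [MeasurableSpace α] {m n : ℕ} (hmn : m ≤ n) :
    Measurable fun ω : α × (Fin n → E) => Fin.take m hmn ω.2 :=
  (measurable_take hmn).comp measurable_snd

variable (μ : Measure E) [SigmaFinite μ] (hh : ∀ r, Measurable (Function.uncurry (h r)))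
  (hint : ∀ r z, ∫⁻ y, (h r z y : ℝ≥0∞) ∂μ = 1)
include hh hint

lemma map_init_withDensity_pathDensity (n : ℕ) :
    ((Measure.pi fun _ : Fin (n + 1) => μ).withDensity fun xs => pathDensity h x (n + 1) xs).map
        Fin.init
      = (Measure.pi fun _ : Fin n => μ).withDensity fun xs => pathDensity h x n xs := by
  have hinit : Measurable (Fin.init (α := fun _ : Fin (n + 1) => E)) := measurable_take n.le_succ
  have hpd := (measurable_pathDensity x hh (n + 1)).coe_nnreal_ennreal
  ext B hB
  set e := MeasurableEquiv.piFinSuccAbove (fun _ : Fin (n + 1) => E) (Fin.last n)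
  have he : MeasurePreserving e.symm (μ.prod (Measure.pi fun _ : Fin n => μ)) _ :=
    (measurePreserving_piFinSuccAbove (fun _ => μ) (Fin.last n)).symm
  have he_symm : ⇑e.symm = fun q : E × (Fin n → E) => Fin.snoc q.2 q.1 := funext fun q => by
    simp [e, MeasurableEquiv.piFinSuccAbove_symm_apply]
    rfl
  have hsnoc : Measurable fun q : E × (Fin n → E) => (Fin.snoc q.2 q.1 : Fin (n + 1) → E) :=
    he_symm ▸ e.symm.measurable
  rw [Measure.map_apply hinit hB, withDensity_apply _ (hinit hB), withDensity_apply _ hB,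
    ← lintegral_indicator (hinit hB), ← lintegral_indicator hB,
    ← he.lintegral_comp_emb e.symm.measurableEmbedding, he_symm,
    lintegral_prod_symm _ ?_]
  · refine lintegral_congr fun xs => ?_
    by_cases hxs : xs ∈ B
    · simp [hxs, Fin.init_snoc, pathDensity_snoc, lintegral_const_mul' _ _ ENNReal.coe_ne_top, hint]
    · simp [hxs, Fin.init_snoc]
  · exact ((hpd.indicator (hinit hB)).comp hsnoc).aemeasurable

lemma map_take_withDensity_pathDensity {m n : ℕ} (hmn : m ≤ n) :
    ((Measure.pi fun _ : Fin n => μ).withDensity fun xs => pathDensity h x n xs).map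
        (Fin.take m hmn)
      = (Measure.pi fun _ : Fin m => μ).withDensity fun xs => pathDensity h x m xs := by
  induction n, hmn using Nat.le_induction with
  | base => exact Measure.map_id
  | succ n hmn ih =>
    rw [← ih, ← map_init_withDensity_pathDensity x μ hh hint n,
      Measure.map_map (g := Fin.take m hmn) (f := Fin.init) (measurable_take hmn)
        (measurable_take n.le_succ)]
    rfl

end MarkovPath

section ChangeKernel

variable {E : Type*} (f0 f1 : E → E → ℝ≥0)

def changeKernel (j r : ℕ) : E → E → ℝ≥0 := if j ≤ r then f1 else f0

lemma transitionProd_changeKernel_congr {j j' k N : ℕ} (hjj' : ∀ r ∈ Ioc k N, j ≤ r ↔ j' ≤ r)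
    (xv : ℕ → E) :
    transitionProd (changeKernel f0 f1 j) k N xv = transitionProd (changeKernel f0 f1 j') k N xv :=
  prod_congr rfl fun r hr => by simp only [changeKernel, hjj' r hr]

/-- `L_m` on `(x_k, …, x_N)` is the likelihood of any change point splitting `k+1, …, N` after
`N - m`. -/
lemma Lfn_eq_transitionProd {k N m j : ℕ} (hm : k + m ≤ N)
    (hj : ∀ r ∈ Ioc k N, N - m + 1 ≤ r ↔ j ≤ r) (xv : ℕ → E) :
    Lfn f0 f1 k N m xv = transitionProd (changeKernel f0 f1 j) k N xv := by
  rw [← transitionProd_changeKernel_congr f0 f1 hj, Lfn, transitionProd,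
    Icc_add_one_left_eq_Ioc, Icc_add_one_left_eq_Ioc,
    ← prod_Ioc_consecutive _ (show k ≤ N - m by omega) (N.sub_le m)]
  congr 1 <;> refine prod_congr rfl fun r hr => ?_ <;> rw [mem_Ioc] at hr
  · rw [changeKernel, if_neg (by omega)]
  · rw [changeKernel, if_pos (by omega)]

lemma ellDens_eq_pathDensity (n j : ℕ) (x : E) (xs : Fin n → E) :
    ellDens f0 f1 n j (extvec n x xs) = pathDensity (changeKernel f0 f1 j) x n xs := by
  unfold ellDens pathDensity
  split_ifs <;> exact Lfn_eq_transitionProd f0 f1 (by omega)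
    (fun r hr => by rw [mem_Ioc] at hr; omega) _

lemma pathDensity_changeKernel_of_lt {m j j' : ℕ} (hj : m < j) (hj' : m < j') (x : E) :
    pathDensity (changeKernel f0 f1 j) x m = pathDensity (changeKernel f0 f1 j') x m :=
  funext fun _ => transitionProd_changeKernel_congr f0 f1
    (fun r hr => by rw [mem_Ioc] at hr; omega) _

variable [MeasurableSpace E] {f0 f1}

lemma measurable_changeKernel (hf0 : Measurable (Function.uncurry f0))
    (hf1 : Measurable (Function.uncurry f1)) (j r : ℕ) :
    Measurable (Function.uncurry (changeKernel f0 f1 j r)) := by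
  unfold changeKernel
  split_ifs
  · exact hf1
  · exact hf0

lemma lintegral_changeKernel {μ : Measure E} (hi0 : ∀ z, ∫⁻ y, (f0 z y : ℝ≥0∞) ∂μ = 1)
    (hi1 : ∀ z, ∫⁻ y, (f1 z y : ℝ≥0∞) ∂μ = 1) (j r : ℕ) (z : E) :
    ∫⁻ y, (changeKernel f0 f1 j r z y : ℝ≥0∞) ∂μ = 1 := by
  unfold changeKernel
  split_ifs
  · exact hi1 z
  · exact hi0 z

end ChangeKernel

section Prior

variable {p : ℝ} (π : ℝ)

lemma tsum_ofReal_pow_mul_one_sub (hp0 : 0 ≤ p) (hp1 : p < 1) (a : ℕ) :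
    ∑' k, ENNReal.ofReal (p ^ (k + a) * (1 - p)) = ENNReal.ofReal (p ^ a) := by
  have hsum : Summable fun k => p ^ (k + a) * (1 - p) := by
    simp_rw [pow_add]
    exact ((summable_geometric_of_lt_one hp0 hp1).mul_right _).mul_right _
  rw [← ENNReal.ofReal_tsum_of_nonneg (fun k => by have := pow_nonneg hp0 (k + a); nlinarith) hsum]
  simp_rw [pow_add]
  rw [tsum_mul_right, tsum_mul_right, tsum_geometric_of_lt_one hp0 hp1]
  field_simp [(sub_pos.2 hp1).ne']

lemma prior_add_succ (hp0 : 0 ≤ p) (hp1 : p ≤ 1) (k m : ℕ) :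
    prior p π (k + (m + 1))
      = ENNReal.ofReal ((1 - π) * p ^ m) * ENNReal.ofReal (p ^ k * (1 - p)) := by
  rw [prior, if_neg (by omega), ← ENNReal.ofReal_mul' (mul_nonneg (pow_nonneg hp0 k) (by linarith))]
  congr 1
  rw [show k + (m + 1) - 1 = k + m by omega, pow_add]
  ring

lemma tsum_prior_add_succ (hp0 : 0 ≤ p) (hp1 : p < 1) (m : ℕ) :
    ∑' k, prior p π (k + (m + 1)) = ENNReal.ofReal ((1 - π) * p ^ m) := by
  have h := tsum_ofReal_pow_mul_one_sub hp0 hp1 0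
  simp only [add_zero, pow_zero, ENNReal.ofReal_one] at h
  simp_rw [prior_add_succ π hp0 hp1.le, ENNReal.tsum_mul_left, h, mul_one]

lemma tsum_prior (hp0 : 0 ≤ p) (hp1 : p < 1) (hπ0 : 0 ≤ π) (hπ1 : π ≤ 1) :
    ∑' j, prior p π j = 1 := by
  have h := tsum_prior_add_succ π hp0 hp1 0
  simp only [zero_add, pow_zero, mul_one] at h
  rw [tsum_eq_zero_add' ENNReal.summable, h, prior, if_pos rfl,
    ← ENNReal.ofReal_add hπ0 (sub_nonneg.2 hπ1), add_sub_cancel, ENNReal.ofReal_one]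

end Prior

lemma tsum_indicator_setOf_lt (f : ℕ → ℝ≥0∞) (k : ℕ) :
    ∑' j, {j | k < j}.indicator f j = ∑' i, f (i + (k + 1)) := by
  rw [← Summable.sum_add_tsum_nat_add' (k := k + 1) ENNReal.summable,
    sum_eq_zero fun i hi => Set.indicator_of_notMem (by simp at hi ⊢; omega) _, zero_add]
  exact tsum_congr fun i => Set.indicator_of_mem (show k < i + (k + 1) by omega) _

section JointDensity

variable {E : Type*} (p π : ℝ) (f0 f1 : E → E → ℝ≥0) (x : E)

/-- `D_m(T)`, the density of `(X₁, …, X_m)` on the event `{θ ∈ T}`. -/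
noncomputable def jointDensity (m : ℕ) (T : Set ℕ) (xs : Fin m → E) : ℝ≥0∞ :=
  ∑' j, T.indicator (fun j => prior p π j * pathDensity (changeKernel f0 f1 j) x m xs) j

lemma jointDensity_le_univ (m : ℕ) (T : Set ℕ) :
    jointDensity p π f0 f1 x m T ≤ jointDensity p π f0 f1 x m Set.univ := fun xs =>
  ENNReal.tsum_le_tsum fun j => by
    rw [Set.indicator_univ]
    exact Set.indicator_le_self _ _ j

lemma jointDensity_univ_eq_add (m k : ℕ) (xs : Fin m → E) :
    jointDensity p π f0 f1 x m Set.univ xs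
      = jointDensity p π f0 f1 x m {j | j ≤ k} xs + jointDensity p π f0 f1 x m {j | k < j} xs := by
  rw [jointDensity, jointDensity, jointDensity, ← ENNReal.tsum_add]
  refine tsum_congr fun j => ?_
  rcases le_or_gt j k with hj | hj <;> simp [hj]

variable {p}

lemma jointDensity_setOf_lt_self (hp0 : 0 ≤ p) (hp1 : p < 1) (m : ℕ) (xs : Fin m → E) :
    jointDensity p π f0 f1 x m {j | m < j} xs
      = ENNReal.ofReal ((1 - π) * p ^ m) * pathDensity (changeKernel f0 f1 (m + 1)) x m xs := by
  rw [jointDensity, tsum_indicator_setOf_lt, ← tsum_prior_add_succ π hp0 hp1,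
    ← ENNReal.tsum_mul_right]
  refine tsum_congr fun i => ?_
  rw [pathDensity_changeKernel_of_lt f0 f1 (j := i + (m + 1)) (j' := m + 1) (by omega) (by omega)]

lemma jointDensity_setOf_le_eq_mul {m₀ l n : ℕ} (hn : m₀ + l + 1 = n) (xs : Fin n → E) :
    jointDensity p π f0 f1 x n {j | j ≤ m₀} xs
      = jointDensity p π f0 f1 x m₀ {j | j ≤ m₀} (Fin.take m₀ (by omega) xs)
          * Lfn f0 f1 m₀ n (l + 1) (extvec n x xs) := by
  rw [jointDensity, jointDensity, ← ENNReal.tsum_mul_right]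
  refine tsum_congr fun j => ?_
  by_cases hj : j ≤ m₀
  · simp only [Set.indicator_of_mem (show j ∈ {j | j ≤ m₀} from hj)]
    rw [pathDensity_eq_mul _ x (show m₀ ≤ n by omega), Lfn_eq_transitionProd f0 f1 (j := j)
      (by omega) (fun r hr => by rw [mem_Ioc] at hr; omega), ENNReal.coe_mul, mul_assoc]
  · simp [hj]

lemma tsum_ofReal_mul_transitionProd_changeKernel (hp0 : 0 ≤ p) (hp1 : p < 1) {m₀ l n : ℕ}
    (hn : m₀ + l + 1 = n) (xv : ℕ → E) :
    ∑' k, ENNReal.ofReal (p ^ k * (1 - p))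
        * transitionProd (changeKernel f0 f1 (k + (m₀ + 1))) m₀ n xv
      = ENNReal.ofReal
          ((∑ k ∈ range (l + 1), p ^ (l - k) * (1 - p) * (Lfn f0 f1 m₀ n (k + 1) xv : ℝ))
          + p ^ (l + 1) * (Lfn f0 f1 m₀ n 0 xv : ℝ)) := by
  have hq : 0 ≤ 1 - p := by linarith
  rw [← Summable.sum_add_tsum_nat_add' (k := l + 1) ENNReal.summable,
    ← sum_range_reflect]
  have hhead : ∀ k ∈ range (l + 1), ENNReal.ofReal (p ^ (l + 1 - 1 - k) * (1 - p))
      * transitionProd (changeKernel f0 f1 (l + 1 - 1 - k + (m₀ + 1))) m₀ n xv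
      = ENNReal.ofReal (p ^ (l - k) * (1 - p) * (Lfn f0 f1 m₀ n (k + 1) xv : ℝ)) := fun k hk => by
    rw [mem_range] at hk
    rw [ENNReal.ofReal_mul (p := p ^ (l - k) * (1 - p)) (by positivity), ENNReal.ofReal_coe_nnreal,
      Nat.add_sub_cancel,
      Lfn_eq_transitionProd f0 f1 (j := l - k + (m₀ + 1)) (by omega)
        (fun r hr => by rw [mem_Ioc] at hr; omega)]
  have htail : ∀ i, ENNReal.ofReal (p ^ (i + (l + 1)) * (1 - p))
      * transitionProd (changeKernel f0 f1 (i + (l + 1) + (m₀ + 1))) m₀ n xv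
      = ENNReal.ofReal (p ^ (i + (l + 1)) * (1 - p)) * Lfn f0 f1 m₀ n 0 xv := fun i => by
    rw [Lfn_eq_transitionProd f0 f1 (j := i + (l + 1) + (m₀ + 1)) (by omega)
      (fun r hr => by rw [mem_Ioc] at hr; omega)]
  rw [sum_congr rfl hhead, tsum_congr htail, ENNReal.tsum_mul_right,
    tsum_ofReal_pow_mul_one_sub hp0 hp1, ← ENNReal.ofReal_sum_of_nonneg (fun k _ => by positivity),
    ← ENNReal.ofReal_coe_nnreal, ← ENNReal.ofReal_mul (by positivity),
    ← ENNReal.ofReal_add (sum_nonneg fun k _ => by positivity) (by positivity)]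

lemma jointDensity_setOf_lt_eq_mul (hp0 : 0 ≤ p) (hp1 : p < 1) {m₀ l n : ℕ}
    (hn : m₀ + l + 1 = n) (xs : Fin n → E) :
    jointDensity p π f0 f1 x n {j | m₀ < j} xs
      = ENNReal.ofReal ((1 - π) * p ^ m₀)
          * pathDensity (changeKernel f0 f1 (m₀ + 1)) x m₀ (Fin.take m₀ (by omega) xs)
          * ENNReal.ofReal ((∑ k ∈ range (l + 1),
              p ^ (l - k) * (1 - p) * (Lfn f0 f1 m₀ n (k + 1) (extvec n x xs) : ℝ))
            + p ^ (l + 1) * (Lfn f0 f1 m₀ n 0 (extvec n x xs) : ℝ)) := by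
  rw [jointDensity, tsum_indicator_setOf_lt,
    ← tsum_ofReal_mul_transitionProd_changeKernel f0 f1 hp0 hp1 hn, ← ENNReal.tsum_mul_left]
  refine tsum_congr fun k => ?_
  rw [pathDensity_eq_mul _ x (show m₀ ≤ n by omega),
    pathDensity_changeKernel_of_lt f0 f1 (j := k + (m₀ + 1)) (j' := m₀ + 1) (by omega) (by omega),
    prior_add_succ π hp0 hp1.le, ENNReal.coe_mul]
  ring

lemma jointDensity_zero_univ (hp0 : 0 ≤ p) (hp1 : p < 1) (hπ0 : 0 ≤ π) (hπ1 : π ≤ 1) :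
    jointDensity p π f0 f1 x 0 Set.univ = 1 :=
  funext fun _ => by simp [jointDensity, pathDensity, transitionProd, tsum_prior π hp0 hp1 hπ0 hπ1]

end JointDensity

lemma measurable_indicator_apply {α ι : Type*} [MeasurableSpace α] {F : ι → α → ℝ≥0∞} (T : Set ι)
    (i : ι) (hF : Measurable (F i)) : Measurable fun a => T.indicator (fun i => F i a) i := by
  by_cases hi : i ∈ T <;> simp [hi, hF]

section ChangePointModel

variable {E : Type*} [MeasurableSpace E] {f0 f1 : E → E → ℝ≥0} (p π : ℝ) (x : E)

lemma measurable_jointDensity (hf0 : Measurable (Function.uncurry f0))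
    (hf1 : Measurable (Function.uncurry f1)) (m : ℕ) (T : Set ℕ) :
    Measurable (jointDensity p π f0 f1 x m T) :=
  Measurable.tsum fun j => measurable_indicator_apply T j
    ((measurable_pathDensity x (measurable_changeKernel hf0 hf1 j) m).coe_nnreal_ennreal.const_mul
      _)

variable (μ : Measure E) [SigmaFinite μ] (hf0 : Measurable (Function.uncurry f0))
  (hf1 : Measurable (Function.uncurry f1))
  (hi0 : ∀ z, ∫⁻ y, (f0 z y : ℝ≥0∞) ∂μ = 1) (hi1 : ∀ z, ∫⁻ y, (f1 z y : ℝ≥0∞) ∂μ = 1)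
include hf0 hf1 hi0 hi1

lemma map_restrict_nuMeasure {m n : ℕ} (hmn : m ≤ n) (T : Set ℕ) :
    ((nuMeasure μ f0 f1 p π x n).restrict {ω | ω.1 ∈ T}).map (fun ω => Fin.take m hmn ω.2)
      = (Measure.pi fun _ : Fin m => μ).withDensity (jointDensity p π f0 f1 x m T) := by
  have hT : MeasurableSet {ω : ℕ × (Fin n → E) | ω.1 ∈ T} :=
    measurable_fst MeasurableSet.of_discrete
  have hpd : ∀ j, Measurable fun xs => (pathDensity (changeKernel f0 f1 j) x m xs : ℝ≥0∞) :=
    fun j => (measurable_pathDensity x (measurable_changeKernel hf0 hf1 j) m).coe_nnreal_ennreal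
  have hjoint : jointDensity p π f0 f1 x m T
      = ∑' j, fun xs =>
          T.indicator (fun j => prior p π j * pathDensity (changeKernel f0 f1 j) x m xs) j :=
    funext fun _ => by rw [ENNReal.tsum_apply]; rfl
  simp_rw [nuMeasure, ellDens_eq_pathDensity]
  rw [Measure.restrict_sum _ hT, Measure.map_sum (measurable_take_snd hmn).aemeasurable, hjoint,
    withDensity_tsum]
  · congr 1
    funext j
    rw [Measure.restrict_smul, Measure.restrict_map measurable_prodMk_left hT, Measure.map_smul,
      Measure.map_map (measurable_take_snd hmn) measurable_prodMk_left]
    by_cases hj : j ∈ T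
    · have hpre : (fun xs => (j, xs)) ⁻¹' {ω : ℕ × (Fin n → E) | ω.1 ∈ T} = Set.univ :=
        Set.eq_univ_of_forall fun _ => hj
      simp only [Set.indicator_of_mem hj]
      rw [hpre, Measure.restrict_univ, Function.comp_def,
        map_take_withDensity_pathDensity x μ (measurable_changeKernel hf0 hf1 j)
          (lintegral_changeKernel hi0 hi1 j), ← withDensity_smul _ (hpd j)]
      rfl
    · have hpre : (fun xs => (j, xs)) ⁻¹' {ω : ℕ × (Fin n → E) | ω.1 ∈ T} = ∅ :=
        Set.eq_empty_of_forall_notMem fun _ => hj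
      simp only [Set.indicator_of_notMem hj]
      rw [hpre, Measure.restrict_empty, Measure.map_zero, smul_zero]
      exact withDensity_zero.symm
  · exact fun j => measurable_indicator_apply T j ((hpd j).const_mul _)

variable (hp0 : 0 ≤ p) (hp1 : p < 1) (hπ0 : 0 ≤ π) (hπ1 : π ≤ 1)
include hp0 hp1 hπ0 hπ1

lemma isProbabilityMeasure_nuMeasure (n : ℕ) :
    IsProbabilityMeasure (nuMeasure μ f0 f1 p π x n) := by
  have h := congrArg (· Set.univ)
    (map_restrict_nuMeasure p π x μ hf0 hf1 hi0 hi1 (Nat.zero_le n) Set.univ)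
  simp only [Set.mem_univ, Set.ofPred_true, Measure.restrict_univ,
    Measure.map_apply (measurable_take_snd _) .univ,
    jointDensity_zero_univ π f0 f1 x hp0 hp1 hπ0 hπ1, withDensity_one] at h
  exact ⟨by simpa using h⟩

lemma condExp_nuMeasure_ae_eq {m n : ℕ} (hmn : m ≤ n) (T : Set ℕ) :
    (nuMeasure μ f0 f1 p π x n)[{ω | ω.1 ∈ T}.indicator fun _ => (1 : ℝ) | Ffil n m hmn]
      =ᵐ[nuMeasure μ f0 f1 p π x n] fun ω =>
        (jointDensity p π f0 f1 x m T (Fin.take m hmn ω.2)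
          / jointDensity p π f0 f1 x m Set.univ (Fin.take m hmn ω.2)).toReal := by
  have := isProbabilityMeasure_nuMeasure p π x μ hf0 hf1 hi0 hi1 hp0 hp1 hπ0 hπ1 n
  have hmap := map_restrict_nuMeasure p π x μ hf0 hf1 hi0 hi1 hmn
  exact condExp_indicator_comap_ae_eq_div (measurable_take_snd hmn)
    (measurable_fst MeasurableSet.of_discrete) (measurable_jointDensity p π x hf0 hf1 m _)
    (measurable_jointDensity p π x hf0 hf1 m T) (jointDensity_le_univ p π f0 f1 x m T)
    (by simpa using hmap Set.univ) (hmap T)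

lemma ae_jointDensity_ne_zero_ne_top {m n : ℕ} (hmn : m ≤ n) :
    ∀ᵐ ω ∂(nuMeasure μ f0 f1 p π x n),
      jointDensity p π f0 f1 x m Set.univ (Fin.take m hmn ω.2) ≠ 0
        ∧ jointDensity p π f0 f1 x m Set.univ (Fin.take m hmn ω.2) ≠ ∞ := by
  have := isProbabilityMeasure_nuMeasure p π x μ hf0 hf1 hi0 hi1 hp0 hp1 hπ0 hπ1 n
  exact ae_ne_zero_ne_top_of_map_eq_withDensity (measurable_take_snd hmn)
    (measurable_jointDensity p π x hf0 hf1 m _)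
    (by simpa using map_restrict_nuMeasure p π x μ hf0 hf1 hi0 hi1 hmn Set.univ)

end ChangePointModel

lemma toReal_div_eq_posterior_update {a b L S : ℝ≥0∞} (ha : a ≠ ∞) (hb : b ≠ ∞) (hL : L ≠ ∞)
    (hS : S ≠ ∞) (hab : a + b ≠ 0) :
    (b * S / (a * L + b * S)).toReal
      = (1 - (a / (a + b)).toReal) * S.toReal
          / ((a / (a + b)).toReal * L.toReal + (1 - (a / (a + b)).toReal) * S.toReal) := by
  have hpos : 0 < a.toReal + b.toReal := by
    rw [← ENNReal.toReal_add ha hb]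
    exact ENNReal.toReal_pos hab (ENNReal.add_ne_top.2 ⟨ha, hb⟩)
  rw [ENNReal.toReal_div, ENNReal.toReal_div, ENNReal.toReal_add ha hb,
    ENNReal.toReal_add (ENNReal.mul_ne_top ha hL) (ENNReal.mul_ne_top hb hS),
    ENNReal.toReal_mul, ENNReal.toReal_mul]
  have h1 : 1 - a.toReal / (a.toReal + b.toReal) = b.toReal / (a.toReal + b.toReal) := by
    field_simp
    ring
  rw [h1, div_mul_eq_mul_div, div_mul_eq_mul_div, ← add_div,
    div_div_div_cancel_right₀ hpos.ne']

section PosteriorUpdate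

variable {E : Type*} {f0 f1 : E → E → ℝ≥0} {p : ℝ} (π : ℝ) (x : E)

lemma toReal_jointDensity_div_eq (hp0 : 0 ≤ p) (hp1 : p < 1) {m₀ l n : ℕ} (hn : m₀ + l + 1 = n)
    (xs : Fin n → E) (h0 : jointDensity p π f0 f1 x m₀ Set.univ (Fin.take m₀ (by omega) xs) ≠ 0)
    (htop : jointDensity p π f0 f1 x m₀ Set.univ (Fin.take m₀ (by omega) xs) ≠ ∞) :
    (jointDensity p π f0 f1 x n {j | m₀ < j} xs / jointDensity p π f0 f1 x n Set.univ xs).toReal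
      = (1 - (jointDensity p π f0 f1 x m₀ {j | j ≤ m₀} (Fin.take m₀ (by omega) xs)
              / jointDensity p π f0 f1 x m₀ Set.univ (Fin.take m₀ (by omega) xs)).toReal)
          * ((∑ k ∈ range (l + 1),
                p ^ (l - k) * (1 - p) * (Lfn f0 f1 m₀ n (k + 1) (extvec n x xs) : ℝ))
              + p ^ (l + 1) * (Lfn f0 f1 m₀ n 0 (extvec n x xs) : ℝ))
          / Gfn f0 f1 p m₀ l (extvec n x xs)
              (jointDensity p π f0 f1 x m₀ {j | j ≤ m₀} (Fin.take m₀ (by omega) xs)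
                / jointDensity p π f0 f1 x m₀ Set.univ (Fin.take m₀ (by omega) xs)).toReal := by
  have hq : 0 ≤ 1 - p := by linarith
  have hs : 0 ≤ (∑ k ∈ range (l + 1),
      p ^ (l - k) * (1 - p) * (Lfn f0 f1 m₀ n (k + 1) (extvec n x xs) : ℝ))
        + p ^ (l + 1) * (Lfn f0 f1 m₀ n 0 (extvec n x xs) : ℝ) := by
    positivity
  have hsplit := jointDensity_univ_eq_add p π f0 f1 x m₀ m₀ (Fin.take m₀ (by omega) xs)
  rw [jointDensity_setOf_lt_self π f0 f1 x hp0 hp1] at hsplit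
  rw [hsplit] at h0 htop ⊢
  rw [jointDensity_univ_eq_add p π f0 f1 x n m₀, jointDensity_setOf_le_eq_mul π f0 f1 x hn,
    jointDensity_setOf_lt_eq_mul π f0 f1 x hp0 hp1 hn,
    toReal_div_eq_posterior_update (ENNReal.add_ne_top.1 htop).1 (ENNReal.add_ne_top.1 htop).2
      ENNReal.coe_ne_top ENNReal.ofReal_ne_top h0, ENNReal.toReal_ofReal hs, ENNReal.coe_toReal,
    Gfn, hn]

end PosteriorUpdate

open MeasureTheory

/-- For `0 ≤ l < n`, `ν`-a.e.
`ν(θ > n-l-1 | 𝓕_n) = (1 - Π_{n-l-1}) (∑_{k=0}^{l} p^{l-k} q L_{k+1} + p^{l+1} L₀) / G_{l+1}`,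
the `L`'s and `G_{l+1}` evaluated at `(X_{n-l-1}, …, X_n)` and `α = Π_{n-l-1}`,
where `Π_m = ν(θ ≤ m | 𝓕_m)`. -/
theorem stmt7 {E : Type*} [MeasurableSpace E] (μ : Measure E) [SigmaFinite μ]
    (f0 f1 : E → E → ℝ≥0) (hf0 : Measurable (Function.uncurry f0))
    (hf1 : Measurable (Function.uncurry f1))
    (hi0 : ∀ z, ∫⁻ y, (f0 z y : ℝ≥0∞) ∂μ = 1) (hi1 : ∀ z, ∫⁻ y, (f1 z y : ℝ≥0∞) ∂μ = 1)
    (p π : ℝ) (hp : p ∈ Set.Ioo (0 : ℝ) 1) (hπ : π ∈ Set.Ioo (0 : ℝ) 1)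
    (x : E) (n l : ℕ) (hl : l < n) :
    ∀ᵐ ω ∂(nuMeasure μ f0 f1 p π x n),
      ((nuMeasure μ f0 f1 p π x n)[Set.indicator {ω' : ℕ × (Fin n → E) | n - l - 1 < ω'.1}
          (fun _ => (1 : ℝ)) | Ffil n n le_rfl]) ω =
        (1 - ((nuMeasure μ f0 f1 p π x n)[Set.indicator {ω' : ℕ × (Fin n → E) | ω'.1 ≤ n - l - 1}
            (fun _ => (1 : ℝ)) | Ffil n (n - l - 1) (by omega)]) ω) *
          ((∑ k ∈ Finset.range (l + 1),
              p ^ (l - k) * (1 - p) * (Lfn f0 f1 (n - l - 1) n (k + 1) (extvec n x ω.2) : ℝ)) +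
            p ^ (l + 1) * (Lfn f0 f1 (n - l - 1) n 0 (extvec n x ω.2) : ℝ)) /
          Gfn f0 f1 p (n - l - 1) l (extvec n x ω.2)
            (((nuMeasure μ f0 f1 p π x n)[Set.indicator {ω' : ℕ × (Fin n → E) | ω'.1 ≤ n - l - 1}
              (fun _ => (1 : ℝ)) | Ffil n (n - l - 1) (by omega)]) ω) := by
  have hm₀ : n - l - 1 ≤ n := by omega
  obtain ⟨hp0, hp1⟩ := hp
  obtain ⟨hπ0, hπ1⟩ := hπ
  filter_upwards [condExp_nuMeasure_ae_eq p π x μ hf0 hf1 hi0 hi1 hp0.le hp1 hπ0.le hπ1.le le_rfl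
      {j | n - l - 1 < j},
    condExp_nuMeasure_ae_eq p π x μ hf0 hf1 hi0 hi1 hp0.le hp1 hπ0.le hπ1.le hm₀ {j | j ≤ n - l - 1},
    ae_jointDensity_ne_zero_ne_top p π x μ hf0 hf1 hi0 hi1 hp0.le hp1 hπ0.le hπ1.le hm₀]
    with ω hgt hle hD
  simp only [Fin.take_eq_self] at hgt hle
  rw [hgt, hle]
  exact toReal_jointDensity_div_eq π x hp0.le hp1 (by omega) ω.2 hD.1 hD.2
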